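/- arXiv:quant-ph/0103094 — 5 statements merged into one kernel-verified Lean document; each statement's English description precedes it below -/
import Mathlib

section
/- For the Chebyshev polynomial of the second kind U_n and any real x ≥ 1, the two-sided bound n + x^n ≤ U_n(x) ≤ (n+1)(x + √(x²−1))^n holds. -/
open Polynomial Real Finset

theorem chebyshevU_sum_formula (x s : ℝ) (hs0 : s ≠ 0) (h2x : 2 * x = s + s⁻¹)
    (n : ℕ) : (Polynomial.Chebyshev.U ℝ n).eval x
      = ∑ k ∈ Finset.range (n+1), s ^ ((n : ℤ) - 2*k) := by
  induction n using Nat.twoStepInduction with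
  | zero => simp [Polynomial.Chebyshev.U_zero]
  | one =>
      rw [show ((1:ℕ):ℤ) = 1 by norm_num, Polynomial.Chebyshev.U_one]
      simp [Finset.sum_range_succ, h2x]
  | more n ih1 ih2 =>
      have key : ∀ e : ℤ, 2*x*s^e = s^(e+1) + s^(e-1) := by
        intro e
        rw [h2x, zpow_add_one₀ hs0, zpow_sub_one₀ hs0]; ring
      have hcast : ((n+2:ℕ):ℤ) = (n:ℤ) + 2 := by push_cast; ring
      have hcast1 : ((n+1:ℕ):ℤ) = (n:ℤ) + 1 := by push_cast; ring
      rw [hcast1] at ih2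
      rw [hcast, Polynomial.Chebyshev.U_add_two]
      simp only [eval_sub, eval_mul, eval_ofNat, eval_X]
      rw [ih1, ih2]
      have expand : 2*x * ∑ k ∈ range (n+1+1), s ^ (((n:ℤ)+1) - 2*k)
          = ∑ k ∈ range (n+2), (s ^ (((n:ℤ)+2) - 2*(k:ℤ)) + s ^ ((n:ℤ) - 2*k)) := by
        rw [Finset.mul_sum]
        refine Finset.sum_congr rfl fun k _ => ?_
        calc 2*x*s^((n:ℤ)+1-2*(k:ℤ))
            = s^(((n:ℤ)+1-2*(k:ℤ))+1) + s^(((n:ℤ)+1-2*(k:ℤ))-1) := key _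
        _ = _ := by congr 1 <;> congr 1 <;> ring
      have first : ∑ k ∈ range (n+2+1), s ^ (((n:ℤ)+2) - 2*(k:ℤ))
          = (∑ k ∈ range (n+2), s ^ (((n:ℤ)+2) - 2*(k:ℤ))) + s ^ (-((n:ℤ)+2)) := by
        rw [Finset.sum_range_succ]; congr 2; push_cast; ring
      have second : ∑ k ∈ range (n+2), s ^ ((n:ℤ) - 2*(k:ℤ))
          = (∑ k ∈ range (n+1), s ^ ((n:ℤ) - 2*(k:ℤ))) + s ^ (-((n:ℤ)+2)) := by
        rw [Finset.sum_range_succ]; congr 2; push_cast; ring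
      rw [Finset.sum_add_distrib] at expand
      rw [expand, first, second]; ring

theorem two_le_zpow_add_zpow_neg (s : ℝ) (hs : 1 ≤ s) (e : ℤ) :
    2 ≤ s ^ e + s ^ (-e) := by
  have h0 : (0:ℝ) < s ^ e := zpow_pos (by linarith) e
  rw [zpow_neg]
  have : s ^ e * (s ^ e)⁻¹ = 1 := mul_inv_cancel₀ (ne_of_gt h0)
  nlinarith [sq_nonneg (s ^ e - 1)]

theorem pow_avg_le (x s : ℝ) (hs : 0 < s) (hx : x = (s + s⁻¹)/2) (n : ℕ) :
    x ^ n ≤ (s ^ n + (s⁻¹) ^ n)/2 := by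
  have h := (convexOn_pow n).2 (Set.mem_Ici.2 hs.le) (Set.mem_Ici.2 (inv_pos.2 hs).le)
    (by norm_num : (0:ℝ) ≤ 1/2) (by norm_num : (0:ℝ) ≤ 1/2) (by norm_num)
  simp only [smul_eq_mul] at h
  have hx' : x ^ n = (1/2*s + 1/2*s⁻¹) ^ n := by rw [hx]; congr 1; ring
  rw [hx']; linarith

/-- For `x ≥ 1`, `n + x^n ≤ U_n(x) ≤ (n+1)(x + √(x²−1))^n`. -/
theorem chebyshevU_two_sided_bound (n : ℕ) (x : ℝ) (hx : 1 ≤ x) :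
    (n : ℝ) + x ^ n ≤ (Polynomial.Chebyshev.U ℝ n).eval x ∧
    (Polynomial.Chebyshev.U ℝ n).eval x ≤ (n + 1) * (x + Real.sqrt (x ^ 2 - 1)) ^ n := by
  set r := Real.sqrt (x ^ 2 - 1) with hr
  have hr0 : 0 ≤ r := Real.sqrt_nonneg _
  have hr2 : r ^ 2 = x ^ 2 - 1 := Real.sq_sqrt (by nlinarith)
  set s := x + r with hsdef
  have hs1 : 1 ≤ s := by simp only [hsdef]; linarith
  have hspos : (0:ℝ) < s := by linarith
  have hs0 : s ≠ 0 := ne_of_gt hspos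
  have hinv : s⁻¹ = x - r := by
    have : s * (x - r) = 1 := by simp only [hsdef]; nlinarith
    field_simp
    linarith [this]
  have h2x : 2 * x = s + s⁻¹ := by rw [hinv]; simp only [hsdef]; ring
  rw [chebyshevU_sum_formula x s hs0 h2x n]
  constructor
  · -- lower bound
    rcases n with _ | m
    · simp
    · -- n = m+1
      have hsplit : ∑ k ∈ range (m+1+1), s ^ (((m+1:ℕ):ℤ) - 2*k)
          = s ^ (((m+1:ℕ):ℤ)) + (∑ k ∈ range m, s ^ ((m:ℤ) - 1 - 2*(k:ℤ)))
            + s ^ (-((m+1:ℕ):ℤ)) := by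
        rw [Finset.sum_range_succ, Finset.sum_range_succ']
        have hbody : (∑ k ∈ range m, s ^ ((((m+1:ℕ)):ℤ) - 2*(((k+1:ℕ)):ℤ)))
            = ∑ k ∈ range m, s ^ ((m:ℤ) - 1 - 2*(k:ℤ)) :=
          Finset.sum_congr rfl fun k _ => by congr 1 <;> (try push_cast) <;> (try ring)
        rw [hbody]
        have e0 : s ^ ((((m+1:ℕ)):ℤ) - 2*(((0:ℕ)):ℤ)) = s ^ (((m+1:ℕ):ℤ)) := by
          congr 1 <;> (try push_cast) <;> (try ring)
        have em : s ^ ((((m+1:ℕ)):ℤ) - 2*(((m+1:ℕ)):ℤ)) = s ^ (-((m+1:ℕ):ℤ)) := by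
          congr 1 <;> (try push_cast) <;> (try ring)
        rw [e0, em]; ring
      rw [hsplit]
      -- middle sum ≥ m
      have hmid : (m:ℝ) ≤ ∑ k ∈ range m, s ^ ((m:ℤ) - 1 - 2*(k:ℤ)) := by
        have hrefl : ∑ k ∈ range m, s ^ ((m:ℤ) - 1 - 2*(k:ℤ))
            = ∑ k ∈ range m, s ^ (-((m:ℤ) - 1 - 2*(k:ℤ))) := by
          rw [← Finset.sum_range_reflect]
          refine Finset.sum_congr rfl fun k hk => ?_
          have hk' : k < m := Finset.mem_range.1 hk
          congr 1
          have : ((m - 1 - k : ℕ) : ℤ) = (m:ℤ) - 1 - k := by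
            omega
          rw [this]; push_cast; ring
        have h2 : 2 * (m:ℝ) ≤ 2 * ∑ k ∈ range m, s ^ ((m:ℤ) - 1 - 2*(k:ℤ)) := by
          nth_rewrite 2 [two_mul]
          nth_rewrite 2 [hrefl]
          rw [← Finset.sum_add_distrib]
          calc 2 * (m:ℝ) = ∑ _k ∈ range m, (2:ℝ) := by
                rw [Finset.sum_const, Finset.card_range]; ring
          _ ≤ _ := Finset.sum_le_sum fun k _ =>
                two_le_zpow_add_zpow_neg s hs1 _
        linarith
      -- endpoints: s^n + s^{-n} ≥ x^n + 1
      have hends : x ^ (m+1) + 1 ≤ s ^ (((m+1:ℕ):ℤ)) + s ^ (-((m+1:ℕ):ℤ)) := by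
        have hconv := pow_avg_le x s hspos (by linarith [h2x]) (m+1)
        have hx1 : 1 ≤ x ^ (m+1) := one_le_pow₀ hx
        have e1 : s ^ (((m+1:ℕ):ℤ)) = s ^ (m+1) := zpow_natCast s (m+1)
        have e2 : s ^ (-((m+1:ℕ):ℤ)) = (s⁻¹) ^ (m+1) := by
          rw [zpow_neg, zpow_natCast, inv_pow]
        rw [e1, e2]
        linarith
      push_cast
      push_cast at hmid hends
      linarith
  · -- upper bound
    calc ∑ k ∈ range (n+1), s ^ ((n:ℤ) - 2*k)
        ≤ ∑ _k ∈ range (n+1), s ^ (n:ℤ) := by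
          refine Finset.sum_le_sum fun k _ => ?_
          exact zpow_le_zpow_right₀ hs1 (by omega)
    _ = (n+1) * s ^ n := by
          rw [Finset.sum_const, Finset.card_range, nsmul_eq_mul, zpow_natCast]
          push_cast; ring
end

section
/- Let ζ be a complex number with |ζ|² − 1 = |S|^{-2} for some nonzero complex S, and define δ_0 = 1, γ_0 = ζ, with the recursion γ_{n+1} = ζ γ_n + conj(δ_n), δ_{n+1} = ζ δ_n + conj(γ_n). Then δ_n satisfies the second-order linear recurrence δ_{n+2} − (ζ + conj(ζ)) δ_{n+1} + (|ζ|² − 1) δ_n = 0, and consequently δ_n = (|ζ|² − 1)^{n/2} U_n( (ζ + conj(ζ)) / (2√(|ζ|²−1)) ), where U_n is the Chebyshev polynomial of the second kind. -/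
open Complex Polynomial

/-! Eliminating `γ` from the coupled recursion (`conj (γ n) = δ (n + 1) - ζ δ n`) leaves a
constant-coefficient recurrence for `δ` with characteristic polynomial
`t² - 2 Re ζ · t + (|ζ|² - 1)`. Writing `r = √(|ζ|² - 1) > 0`, the rescaled sequence `δ n / rⁿ`
obeys the Chebyshev recurrence `u (n + 2) = 2 x u (n + 1) - u n` at `x = Re ζ / r`, with the same
initial values as `U_n(x)`. -/

theorem Polynomial.Chebyshev.eq_pow_mul_eval_U_of_recurrence {R : Type*} [CommRing R]
    (r x : R) (u : ℕ → R) (h0 : u 0 = 1) (h1 : u 1 = 2 * r * x)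
    (h : ∀ n, u (n + 2) = 2 * r * x * u (n + 1) - r ^ 2 * u n) (n : ℕ) :
    u n = r ^ n * (Chebyshev.U R n).eval x := by
  induction n using Nat.twoStepInduction with
  | zero => simp [h0]
  | one => simp [h1]; ring
  | more n ih0 ih1 =>
    rw [h n, ih0, ih1]
    push_cast
    rw [Chebyshev.U_add_two]
    simp only [eval_sub, eval_mul, eval_ofNat, eval_X]
    ring

section CoupledRecursion

variable {ζ : ℂ} {γ δ : ℕ → ℂ}

theorem delta_add_two_of_coupled_recursion
    (hγ : ∀ n, γ (n + 1) = ζ * γ n + (starRingEnd ℂ) (δ n))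
    (hδ : ∀ n, δ (n + 1) = ζ * δ n + (starRingEnd ℂ) (γ n)) (n : ℕ) :
    δ (n + 2) - (ζ + (starRingEnd ℂ) ζ) * δ (n + 1)
      + ((‖ζ‖ ^ 2 - 1 : ℝ) : ℂ) * δ n = 0 := by
  have hconj_γ : (starRingEnd ℂ) (γ n) = δ (n + 1) - ζ * δ n := by
    rw [hδ n]; ring
  have hδ_two : δ (n + 2) =
      ζ * δ (n + 1) + (starRingEnd ℂ) ζ * (starRingEnd ℂ) (γ n) + δ n := by
    rw [hδ (n + 1), hγ n, map_add, map_mul, conj_conj]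
    ring
  have hnorm : ζ * (starRingEnd ℂ) ζ = ((‖ζ‖ ^ 2 : ℝ) : ℂ) := by
    rw [mul_conj, normSq_eq_norm_sq]
  rw [hδ_two, hconj_γ]
  push_cast at hnorm ⊢
  linear_combination (-δ n) * hnorm

end CoupledRecursion

/-- The recursion coefficients `δ_n` satisfy a Chebyshev-type second-order recurrence and
are given by Chebyshev polynomials of the second kind. -/
theorem delta_chebyshev (S ζ : ℂ) (hS : S ≠ 0)
    (hζ : ‖ζ‖ ^ 2 - 1 = (‖S‖ ^ 2)⁻¹)
    (γ δ : ℕ → ℂ)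
    (hδ0 : δ 0 = 1) (hγ0 : γ 0 = ζ)
    (hγ : ∀ n, γ (n + 1) = ζ * γ n + (starRingEnd ℂ) (δ n))
    (hδ : ∀ n, δ (n + 1) = ζ * δ n + (starRingEnd ℂ) (γ n)) :
    (∀ n, δ (n + 2) - (ζ + (starRingEnd ℂ) ζ) * δ (n + 1)
        + ((‖ζ‖ ^ 2 - 1 : ℝ) : ℂ) * δ n = 0) ∧
    (∀ n : ℕ, δ n = ((Real.sqrt (‖ζ‖ ^ 2 - 1) : ℝ) : ℂ) ^ n *
        (Polynomial.Chebyshev.U ℂ n).eval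
          ((ζ + (starRingEnd ℂ) ζ) / (2 * ((Real.sqrt (‖ζ‖ ^ 2 - 1) : ℝ) : ℂ)))) := by
  have hrec := delta_add_two_of_coupled_recursion hγ hδ
  refine ⟨hrec, ?_⟩
  have hpos : 0 < ‖ζ‖ ^ 2 - 1 := by
    rw [hζ]; positivity
  set r : ℂ := ((Real.sqrt (‖ζ‖ ^ 2 - 1) : ℝ) : ℂ)
  have hr_sq : r ^ 2 = ((‖ζ‖ ^ 2 - 1 : ℝ) : ℂ) := by
    rw [← ofReal_pow, Real.sq_sqrt hpos.le]
  have hr_ne : r ≠ 0 := ofReal_ne_zero.mpr (Real.sqrt_ne_zero'.mpr hpos)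
  have htrace : 2 * r * ((ζ + (starRingEnd ℂ) ζ) / (2 * r)) = ζ + (starRingEnd ℂ) ζ := by
    field_simp
  refine Chebyshev.eq_pow_mul_eval_U_of_recurrence r _ δ hδ0 ?_ fun n => ?_
  · rw [htrace, hδ 0, hδ0, hγ0, mul_one]
  · rw [htrace, hr_sq]
    linear_combination hrec n
end

section
/- Define |t_N(k)|² = 1/(1 + |S|² U_{N-1}(x)²) with x = Re(ε̄R), |R|²−|S|²=1. If |x| ≤ 1, then |t_N(k)|² ≥ (1 − x²)/(1 + |S|² − x²). -/
open Polynomial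

/-- On `[-1, 1]`, write `x = cos θ`; then `(1 - x²) U_n(x)² = sin² ((n + 1) θ)`. -/
theorem Polynomial.Chebyshev.one_sub_sq_mul_eval_U_sq_le_one (n : ℤ) {x : ℝ} (hx : |x| ≤ 1) :
    (1 - x ^ 2) * (Chebyshev.U ℝ n).eval x ^ 2 ≤ 1 := by
  obtain ⟨hx₁, hx₂⟩ := abs_le.mp hx
  set θ := Real.arccos x
  have hcos : Real.cos θ = x := Real.cos_arccos hx₁ hx₂
  calc (1 - x ^ 2) * (Chebyshev.U ℝ n).eval x ^ 2
      = ((Chebyshev.U ℝ n).eval (Real.cos θ) * Real.sin θ) ^ 2 := by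
        rw [hcos, ← hcos, ← Real.sin_sq_add_cos_sq θ]; ring
    _ = Real.sin ((n + 1) * θ) ^ 2 := by rw [Chebyshev.U_real_cos]
    _ ≤ 1 := Real.sin_sq_le_one _

theorem div_add_le_one_div_one_add_mul {a s u : ℝ} (ha : 0 ≤ a) (hs : 0 ≤ s)
    (hau : a * u ^ 2 ≤ 1) : a / (s + a) ≤ 1 / (1 + s * u ^ 2) := by
  have hden : 0 < 1 + s * u ^ 2 := by positivity
  rcases (add_nonneg hs ha).eq_or_lt with h0 | h0
  · rw [← h0, div_zero]
    positivity
  · rw [div_le_div_iff₀ h0 hden]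
    nlinarith [mul_le_mul_of_nonneg_left hau hs]

theorem serial_transmission_lower_bound_band_general (S : ℂ)
    (N : ℕ)
    (x : ℝ) (hx1 : |x| ≤ 1) :
    1 / (1 + ‖S‖ ^ 2 * ((Polynomial.Chebyshev.U ℝ ((N : ℤ) - 1)).eval x) ^ 2) ≥
      (1 - x ^ 2) / (1 + ‖S‖ ^ 2 - x ^ 2) := by
  have hx2 : 0 ≤ 1 - x ^ 2 := sub_nonneg.2 ((sq_le_one_iff_abs_le_one x).2 hx1)
  rw [show 1 + ‖S‖ ^ 2 - x ^ 2 = ‖S‖ ^ 2 + (1 - x ^ 2) by ring]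
  exact div_add_le_one_div_one_add_mul hx2 (by positivity)
    (Chebyshev.one_sub_sq_mul_eval_U_sq_le_one _ hx1)

/-- In-band lower bound for the serial transmission probability. -/
theorem serial_transmission_lower_bound_band (R S : ℂ)
    (hRS : ‖R‖ ^ 2 - ‖S‖ ^ 2 = 1)
    (k ℓ : ℝ) (ε : ℂ) (hε : ε = Complex.exp (Complex.I * k * ℓ))
    (N : ℕ) (hN : 1 ≤ N)
    (x : ℝ) (hx : x = ((starRingEnd ℂ) ε * R).re) (hx1 : |x| ≤ 1) :
    1 / (1 + ‖S‖ ^ 2 * ((Polynomial.Chebyshev.U ℝ ((N : ℤ) - 1)).eval x) ^ 2) ≥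
      (1 - x ^ 2) / (1 + ‖S‖ ^ 2 - x ^ 2) :=
  serial_transmission_lower_bound_band_general S N x hx1
end

section
/- Define |t_N(k)|² = 1/(1 + |S|² U_{N-1}(x)²) where x = Re(ε̄R) with |x| > 1 (gap region), |R|² − |S|² = 1. Then, using U_{N-1}(|x|) ≥ N−1+|x|^{N−1}, one has |t_N(k)|² ≤ 1/(1 + |S|²(N−1+|x|^{N−1})²), which tends to 0 as N → ∞ whenever S ≠ 0. -/
open Complex Polynomial Filter

lemma cheb_rec (y : ℝ) (n : ℤ) : (Polynomial.Chebyshev.U ℝ (n + 2)).eval y =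
    2 * y * (Polynomial.Chebyshev.U ℝ (n + 1)).eval y -
      (Polynomial.Chebyshev.U ℝ n).eval y := by
  rw [Polynomial.Chebyshev.U_add_two]
  simp only [eval_sub, eval_mul, eval_ofNat, eval_X]

lemma cheb_aux (y : ℝ) (hy : 1 ≤ y) : ∀ n : ℕ,
    ((n : ℝ) + y ^ n ≤ (Polynomial.Chebyshev.U ℝ (n : ℤ)).eval y ∧
      1 ≤ (Polynomial.Chebyshev.U ℝ ((n : ℤ) + 1)).eval y -
        y * (Polynomial.Chebyshev.U ℝ (n : ℤ)).eval y) := by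
  intro n
  induction n with
  | zero =>
    constructor
    · simp [Polynomial.Chebyshev.U_zero]
    · simp [Polynomial.Chebyshev.U_zero, Polynomial.Chebyshev.U_one]
      linarith
  | succ n ih =>
    obtain ⟨h1, h2⟩ := ih
    have hy0 : (0 : ℝ) ≤ y := by linarith
    have hpos : (0 : ℝ) ≤ (Polynomial.Chebyshev.U ℝ (n : ℤ)).eval y := by
      have : (0 : ℝ) ≤ (n : ℝ) + y ^ n := by positivity
      linarith
    have hyn : (1 : ℝ) ≤ y ^ n := one_le_pow₀ hy
    have hnn : (0 : ℝ) ≤ (n : ℝ) := Nat.cast_nonneg n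
    constructor
    · push_cast
      have hya : y * ((n : ℝ) + y ^ n) ≤
          y * (Polynomial.Chebyshev.U ℝ (n : ℤ)).eval y :=
        mul_le_mul_of_nonneg_left h1 hy0
      have hny : (n : ℝ) ≤ y * n := by nlinarith
      have hp : y ^ (n + 1) = y * y ^ n := by rw [pow_succ]; ring
      linarith
    · push_cast
      rw [show ((n : ℤ) + 1 + 1) = ((n : ℤ) + 2) by ring, cheb_rec]
      have ha : 0 ≤ (y ^ 2 - 1) * (Polynomial.Chebyshev.U ℝ (n : ℤ)).eval y :=
        mul_nonneg (by nlinarith) hpos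
      have hb : y * 1 ≤ y * ((Polynomial.Chebyshev.U ℝ ((n : ℤ) + 1)).eval y -
          y * (Polynomial.Chebyshev.U ℝ (n : ℤ)).eval y) :=
        mul_le_mul_of_nonneg_left h2 hy0
      nlinarith


lemma cheb_lower (y : ℝ) (hy : 1 ≤ y) (n : ℕ) :
    (n : ℝ) + y ^ n ≤ (Polynomial.Chebyshev.U ℝ (n : ℤ)).eval y :=
  (cheb_aux y hy n).1

lemma cheb_parity (y : ℝ) : ∀ n : ℕ,
    (Polynomial.Chebyshev.U ℝ (n : ℤ)).eval (-y) = (-1) ^ n *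
        (Polynomial.Chebyshev.U ℝ (n : ℤ)).eval y ∧
    (Polynomial.Chebyshev.U ℝ ((n : ℤ) + 1)).eval (-y) = (-1) ^ (n + 1) *
        (Polynomial.Chebyshev.U ℝ ((n : ℤ) + 1)).eval y := by
  intro n
  induction n with
  | zero => simp [Polynomial.Chebyshev.U_zero, Polynomial.Chebyshev.U_one]
  | succ n ih =>
    obtain ⟨h1, h2⟩ := ih
    constructor
    · push_cast
      exact h2
    · push_cast
      rw [show ((n : ℤ) + 1 + 1) = ((n : ℤ) + 2) by ring, cheb_rec, cheb_rec, h1, h2]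
      ring

/-- In-gap upper bound for the serial transmission probability and its decay as `N → ∞`. -/
theorem serial_transmission_upper_bound_gap (R S : ℂ) (hS : S ≠ 0)
    (hRS : ‖R‖ ^ 2 - ‖S‖ ^ 2 = 1)
    (x : ℝ) (hx1 : 1 < |x|) :
    (∀ N : ℕ, 1 ≤ N →
      1 / (1 + ‖S‖ ^ 2 * ((Polynomial.Chebyshev.U ℝ ((N : ℤ) - 1)).eval x) ^ 2) ≤
        1 / (1 + ‖S‖ ^ 2 * ((N : ℝ) - 1 + |x| ^ (N - 1)) ^ 2)) ∧
    Filter.Tendsto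
      (fun N : ℕ =>
        1 / (1 + ‖S‖ ^ 2 * ((Polynomial.Chebyshev.U ℝ ((N : ℤ) - 1)).eval x) ^ 2))
      Filter.atTop (nhds 0) := by
  have hS2 : 0 < ‖S‖ ^ 2 := by
    have : ‖S‖ ≠ 0 := by simpa using hS
    positivity
  have hx0 : (1 : ℝ) ≤ |x| := le_of_lt hx1
  have hsq : ∀ n : ℕ, ((n : ℝ) + |x| ^ n) ^ 2 ≤
      ((Polynomial.Chebyshev.U ℝ (n : ℤ)).eval x) ^ 2 := by
    intro n
    have habs : ((Polynomial.Chebyshev.U ℝ (n : ℤ)).eval x) ^ 2 =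
        ((Polynomial.Chebyshev.U ℝ (n : ℤ)).eval |x|) ^ 2 := by
      rcases abs_choice x with h | h
      · rw [h]
      · rw [h, (cheb_parity x n).1]
        rcases Nat.even_or_odd n with he | ho
        · rw [he.neg_one_pow]; ring
        · rw [ho.neg_one_pow]; ring
    rw [habs]
    have hl := cheb_lower |x| hx0 n
    have hpos : (0 : ℝ) ≤ (n : ℝ) + |x| ^ n := by positivity
    nlinarith
  have key : ∀ N : ℕ, 1 ≤ N →
      1 / (1 + ‖S‖ ^ 2 * ((Polynomial.Chebyshev.U ℝ ((N : ℤ) - 1)).eval x) ^ 2) ≤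
        1 / (1 + ‖S‖ ^ 2 * ((N : ℝ) - 1 + |x| ^ (N - 1)) ^ 2) := by
    intro N hN
    obtain ⟨n, rfl⟩ := Nat.exists_eq_add_of_le hN
    have hcast : ((1 + n : ℕ) : ℤ) - 1 = (n : ℤ) := by push_cast; ring
    have hcast2 : ((1 + n : ℕ) : ℝ) - 1 = (n : ℝ) := by push_cast; ring
    have hsub : (1 + n) - 1 = n := by omega
    rw [hcast, hcast2, hsub]
    apply one_div_le_one_div_of_le
    · positivity
    · have h := mul_le_mul_of_nonneg_left (hsq n) hS2.le
      linarith
  refine ⟨key, ?_⟩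
  have hub : ∀ N : ℕ, 1 ≤ N →
      1 / (1 + ‖S‖ ^ 2 * ((Polynomial.Chebyshev.U ℝ ((N : ℤ) - 1)).eval x) ^ 2) ≤
        1 / (1 + ‖S‖ ^ 2 * ((N : ℝ) - 1) ^ 2) := by
    intro N hN
    refine le_trans (key N hN) ?_
    apply one_div_le_one_div_of_le
    · positivity
    · have h1N : (1 : ℝ) ≤ (N : ℝ) := by exact_mod_cast hN
      have hp : (0 : ℝ) ≤ |x| ^ (N - 1) := by positivity
      have hmono : ((N : ℝ) - 1) ^ 2 ≤ ((N : ℝ) - 1 + |x| ^ (N - 1)) ^ 2 := by nlinarith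
      have := mul_le_mul_of_nonneg_left hmono hS2.le
      linarith
  have hlb : ∀ N : ℕ, (0 : ℝ) ≤
      1 / (1 + ‖S‖ ^ 2 * ((Polynomial.Chebyshev.U ℝ ((N : ℤ) - 1)).eval x) ^ 2) := by
    intro N; positivity
  have h1 : Filter.Tendsto (fun N : ℕ => 1 + ‖S‖ ^ 2 * ((N : ℝ) - 1) ^ 2)
      Filter.atTop Filter.atTop := by
    apply Filter.tendsto_atTop_add_const_left
    apply Filter.Tendsto.const_mul_atTop hS2
    have h : Filter.Tendsto (fun N : ℕ => (N : ℝ) - 1) Filter.atTop Filter.atTop :=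
      Filter.tendsto_atTop_add_const_right _ _ tendsto_natCast_atTop_atTop
    simpa [sq] using h.atTop_mul_atTop₀ h
  have htend : Filter.Tendsto (fun N : ℕ =>
      1 / (1 + ‖S‖ ^ 2 * ((N : ℝ) - 1) ^ 2)) Filter.atTop (nhds 0) := by
    simpa [one_div, Pi.inv_def] using h1.inv_tendsto_atTop
  exact tendsto_of_tendsto_of_tendsto_of_le_of_le' tendsto_const_nhds htend
    (Filter.Eventually.of_forall hlb) (Filter.eventually_atTop.mpr ⟨1, hub⟩)
end

section
/- Let β be real and nonzero, ε = e^{ikℓ} with kℓ ∉ πℤ, ζ = cos kℓ + β sin kℓ, and define t_N = −ε^{1−N}/(ε U_{N−2}(ζ) − (1+iβ)U_{N−1}(ζ)), r_N = iβ U_{N−1}(ζ)/(ε U_{N−2}(ζ) − (1+iβ)U_{N−1}(ζ)). Then |t_N|² = 1/(1 + β² U_{N−1}(ζ)²) and |r_N|² + |t_N|² = 1. -/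
open Complex Polynomial

/-! With `a = U_{N-2}(ζ)`, `b = U_{N-1}(ζ)` and `|ε| = 1`, both probabilities only depend on
`|D|²` for the common denominator `D = ε a - (1 + iβ) b`. Expanding with `ε = cos θ + i sin θ`
gives `|D|² = a² + (1 + β²) b² - 2 (cos θ + β sin θ) a b`, and the Pell-type identity
`a² + b² - 2 ζ a b = 1` for consecutive Chebyshev polynomials reduces this to `1 + β² b²`. -/

namespace Polynomial.Chebyshev

theorem U_sq_add_U_sq (R : Type*) [CommRing R] (n : ℤ) :
    U R n ^ 2 + U R (n + 1) ^ 2 - 2 * X * U R n * U R (n + 1) = 1 := by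
  have h := congrArg (·.comp (2 * X)) (S_sq_add_S_sq R n)
  simpa only [sub_comp, add_comp, mul_comp, pow_comp, X_comp, ofNat_comp, one_comp,
    S_comp_two_mul_X, mul_assoc] using h

end Polynomial.Chebyshev

theorem sq_norm_exp_mul_sub_of_pell (θ β a b : ℝ)
    (h : a ^ 2 + b ^ 2 - 2 * (Real.cos θ + β * Real.sin θ) * a * b = 1) :
    ‖exp (θ * I) * a - (1 + I * β) * b‖ ^ 2 = 1 + β ^ 2 * b ^ 2 := by
  rw [Complex.sq_norm, exp_mul_I, ← ofReal_cos, ← ofReal_sin]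
  simp only [normSq_apply, sub_re, sub_im, mul_re, mul_im, add_re, add_im, ofReal_re, ofReal_im,
    I_re, I_im, one_re, one_im]
  linear_combination a ^ 2 * Real.sin_sq_add_cos_sq θ + h

theorem comb_graph_probabilities_general (β k ℓ : ℝ)
    (ε : ℂ) (hε : ε = Complex.exp (Complex.I * k * ℓ))
    (ζ : ℝ) (hζ : ζ = Real.cos (k * ℓ) + β * Real.sin (k * ℓ))
    (N : ℕ)
    (tN rN : ℂ)
    (htN : tN = -ε ^ (1 - (N : ℤ)) /
      (ε * (Polynomial.Chebyshev.U ℂ ((N : ℤ) - 2)).eval (ζ : ℂ)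
        - (1 + Complex.I * β) * (Polynomial.Chebyshev.U ℂ ((N : ℤ) - 1)).eval (ζ : ℂ)))
    (hrN : rN = Complex.I * β * (Polynomial.Chebyshev.U ℂ ((N : ℤ) - 1)).eval (ζ : ℂ) /
      (ε * (Polynomial.Chebyshev.U ℂ ((N : ℤ) - 2)).eval (ζ : ℂ)
        - (1 + Complex.I * β) * (Polynomial.Chebyshev.U ℂ ((N : ℤ) - 1)).eval (ζ : ℂ))) :
    ‖tN‖ ^ 2 =
      1 / (1 + β ^ 2 * ((Polynomial.Chebyshev.U ℝ ((N : ℤ) - 1)).eval ζ) ^ 2) ∧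
    ‖rN‖ ^ 2 + ‖tN‖ ^ 2 = 1 := by
  have hU (n : ℤ) : (Chebyshev.U ℂ n).eval (ζ : ℂ) = (((Chebyshev.U ℝ n).eval ζ : ℝ) : ℂ) :=
    (Chebyshev.algebraMap_eval_U ζ n).symm
  rw [hU, hU] at htN hrN
  set a := (Chebyshev.U ℝ ((N : ℤ) - 2)).eval ζ
  set b := (Chebyshev.U ℝ ((N : ℤ) - 1)).eval ζ
  have hε_polar : ε = exp ((k * ℓ : ℝ) * I) := by rw [hε]; push_cast; ring_nf
  have hpell : a ^ 2 + b ^ 2 - 2 * ζ * a * b = 1 := by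
    simpa [a, b, sub_add_cancel, show (N : ℤ) - 2 + 1 = N - 1 by ring] using
      congrArg (eval ζ) (Chebyshev.U_sq_add_U_sq ℝ ((N : ℤ) - 2))
  have hD := sq_norm_exp_mul_sub_of_pell (k * ℓ) β a b (hζ ▸ hpell)
  rw [← hε_polar] at hD
  have hε1 : ‖ε‖ = 1 := by rw [hε_polar]; exact norm_exp_ofReal_mul_I _
  have ht : ‖tN‖ ^ 2 = 1 / (1 + β ^ 2 * b ^ 2) := by
    rw [htN, norm_div, div_pow, hD, norm_neg, norm_zpow, hε1, one_zpow, one_pow]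
  have hr : ‖rN‖ ^ 2 = β ^ 2 * b ^ 2 / (1 + β ^ 2 * b ^ 2) := by
    rw [hrN, norm_div, div_pow, hD, norm_mul, norm_mul, norm_I, one_mul, norm_real, norm_real,
      Real.norm_eq_abs, Real.norm_eq_abs, mul_pow, sq_abs, sq_abs]
  refine ⟨ht, ?_⟩
  rw [hr, ht, ← add_div, div_eq_one_iff_eq (by positivity)]
  ring

/-- Comb-graph transmission and reflection probabilities:
`|t_N|² = 1/(1+β²U_{N-1}(ζ)²)` and `|r_N|² + |t_N|² = 1`. -/
theorem comb_graph_probabilities (β k ℓ : ℝ) (hβ : β ≠ 0)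
    (hkl : ∀ m : ℤ, k * ℓ ≠ m * Real.pi)
    (ε : ℂ) (hε : ε = Complex.exp (Complex.I * k * ℓ))
    (ζ : ℝ) (hζ : ζ = Real.cos (k * ℓ) + β * Real.sin (k * ℓ))
    (N : ℕ) (hN : 1 ≤ N)
    (tN rN : ℂ)
    (htN : tN = -ε ^ (1 - (N : ℤ)) /
      (ε * (Polynomial.Chebyshev.U ℂ ((N : ℤ) - 2)).eval (ζ : ℂ)
        - (1 + Complex.I * β) * (Polynomial.Chebyshev.U ℂ ((N : ℤ) - 1)).eval (ζ : ℂ)))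
    (hrN : rN = Complex.I * β * (Polynomial.Chebyshev.U ℂ ((N : ℤ) - 1)).eval (ζ : ℂ) /
      (ε * (Polynomial.Chebyshev.U ℂ ((N : ℤ) - 2)).eval (ζ : ℂ)
        - (1 + Complex.I * β) * (Polynomial.Chebyshev.U ℂ ((N : ℤ) - 1)).eval (ζ : ℂ))) :
    ‖tN‖ ^ 2 =
      1 / (1 + β ^ 2 * ((Polynomial.Chebyshev.U ℝ ((N : ℤ) - 1)).eval ζ) ^ 2) ∧
    ‖rN‖ ^ 2 + ‖tN‖ ^ 2 = 1 :=
  comb_graph_probabilities_general β k ℓ ε hε ζ hζ N tN rN htN hrN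
end
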